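/- Each of the three elements x_1 = a_4r + a_3r^2, x_2 = a_4^2r + 2a_3a_4r^2 + 3a_3^2r^3, and x_3 = a_4^3r + 3a_3a_4^2r^2 − a_3^2a_4r^3 − 3a_3^3r^4 of C[r] is a cocycle: d(x_1) = d(x_2) = d(x_3) = 0 in C[r_1,r_2]. -/

import Mathlib

/-!
`Cbar = 𝔽_5[a_3,a_4]` (the variables `0,1 : Fin 2` are `a_3, a_4`),
`q(t) = t^5 + a_3t^2 + a_4t`, and `etaR : Cbar → Cbar[r]` is the 𝔽_5-algebra map sending
`a_i` (for `i = 3,4`) to the coefficient of `x^{5-i}` in `q(x+r) - q(r)`, computed in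
`Cbar[r][x]`.  This is the reduction modulo `(5, a_1, a_2, a_5)` of the
Gorbounov–Hopkins–Mahowald Hopf algebroid at the prime `5`.
-/

/-- The ring `C = 𝔽_5[a_3,a_4]`. -/
abbrev Cbar : Type := MvPolynomial (Fin 2) (ZMod 5)

/-- The generator `a_3`. -/
noncomputable def a3 : Cbar := MvPolynomial.X 0
/-- The generator `a_4`. -/
noncomputable def a4 : Cbar := MvPolynomial.X 1

/-- The polynomial `q(t) = t^5 + a_3t^2 + a_4t` as an element of `C[t]`. -/
noncomputable def q : Polynomial Cbar :=
  Polynomial.X ^ 5 + Polynomial.C a3 * Polynomial.X ^ 2 + Polynomial.C a4 * Polynomial.X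

/-- `q(x+r) - q(r)`, an element of `C[r][x]` (the inner variable is `r`, the outer is `x`). -/
noncomputable def qShift : Polynomial (Polynomial Cbar) :=
  Polynomial.eval₂ (Polynomial.C.comp Polynomial.C)
      (Polynomial.X + Polynomial.C Polynomial.X) q -
    Polynomial.eval₂ (Polynomial.C.comp Polynomial.C) (Polynomial.C Polynomial.X) q

/-- The right unit `η_R : C → C[r]`, sending `a_i` (for `i = 3,4`) to the coefficient of
`x^{5-i}` in `q(x+r) - q(r)`. -/
noncomputable def etaR : Cbar →ₐ[ZMod 5] Polynomial Cbar :=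
  MvPolynomial.aeval (fun k : Fin 2 => qShift.coeff (2 - k.1))

/-- The cobar differential: for `f = ∑_k c_k r^k`, `d(f) = ∑_k η_R(c_k)[r:=r_1]·r_2^k
− f[r:=r_1+r_2] + f[r:=r_1]`, an element of `C[r_1][r_2]` (the inner variable is `r_1`,
the outer is `r_2`). -/
noncomputable def cobarD (f : Polynomial Cbar) : Polynomial (Polynomial Cbar) :=
  (∑ k ∈ Finset.range (f.natDegree + 1),
      Polynomial.C (etaR (f.coeff k)) * Polynomial.X ^ k) -
    Polynomial.eval₂ (Polynomial.C.comp Polynomial.C)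
      (Polynomial.C Polynomial.X + Polynomial.X) f +
    Polynomial.C f

/-- The class `b = r_1^4r_2 + 2r_1^3r_2^2 + 2r_1^2r_2^3 + r_1r_2^4`, the mod-5 reduction of
`((r_1+r_2)^5 − r_1^5 − r_2^5)/5`. -/
noncomputable def bclass : Polynomial (Polynomial Cbar) :=
  Polynomial.C (Polynomial.X ^ 4) * Polynomial.X +
    2 * Polynomial.C (Polynomial.X ^ 3) * Polynomial.X ^ 2 +
    2 * Polynomial.C (Polynomial.X ^ 2) * Polynomial.X ^ 3 +
    Polynomial.C Polynomial.X * Polynomial.X ^ 4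

/-!
Since `(x + r)^5 = x^5 + r^5` in characteristic `5`, the right unit is `η_R(a_3) = a_3` and
`η_R(a_4) = a_4 + 2a_3r`. These satisfy `η_R(η_R c)(r_1, r_2) = η_R(c)(r_1 + r_2)`, which makes
every `η_R(c) - c` a cocycle, and `d` commutes with multiplication by the primitive element
`a_3`. A direct computation gives `a_3x_1 = η_R(c) - c` for `c = 4a_4^2`, and likewise
`a_3x_2`, `a_3x_3` for `c = a_4^3, 2a_4^4`; since `a_3` is not a zero divisor,
`d(x_i) = 0`.
-/

open Polynomial

section

local instance : Fact (Nat.Prime 5) := ⟨Nat.prime_five⟩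

lemma qShift_eq : qShift = X ^ 5 + C (C a3) * X ^ 2 + C (C a4 + 2 * C a3 * X) * X := by
  have frobenius : (X + C (X : Cbar[X])) ^ 5 = X ^ 5 + C X ^ 5 :=
    add_pow_char (R := Cbar[X][X]) _ _ _
  simp only [qShift, q, eval₂_add, eval₂_mul (R := Cbar) (S := Cbar[X][X]),
    eval₂_pow (R := Cbar) (S := Cbar[X][X]), eval₂_C, eval₂_X, RingHom.coe_comp,
    Function.comp_apply, frobenius, map_add, map_mul, map_ofNat]
  ring

lemma etaR_a3 : etaR a3 = C a3 := by
  simp [etaR, a3, qShift_eq]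

lemma etaR_a4 : etaR a4 = C a4 + 2 * C a3 * X := by
  simp [etaR, a4, qShift_eq]

lemma cobarD_eq (f : Cbar[X]) :
    cobarD f = f.map etaR - f.eval₂ (C.comp C) (C X + X) + C f := by
  simp only [cobarD, map, eval₂_eq_sum_range, RingHom.coe_comp, Function.comp_apply,
    RingHom.coe_coe]

lemma map_etaR_etaR (c : Cbar) :
    (etaR c).map etaR = (etaR c).eval₂ (C.comp C) (C X + X) := by
  refine MvPolynomial.hom_eq_hom ((mapRingHom etaR.toRingHom).comp etaR.toRingHom)
    ((eval₂RingHom (C.comp C) (C X + X : Cbar[X][X])).comp etaR.toRingHom)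
    (RingHom.ext_zmod _ _) (fun i => ?_) c
  fin_cases i
  · change (etaR a3).map etaR.toRingHom = (etaR a3).eval₂ _ _
    simp [etaR_a3]
  · change (etaR a4).map etaR.toRingHom = (etaR a4).eval₂ _ _
    simp [etaR_a3, etaR_a4, eval₂_mul (R := Cbar) (S := Cbar[X][X]), map_ofNat C 2]
    ring

lemma cobarD_coboundary (c : Cbar) : cobarD (etaR c - C c) = 0 := by
  rw [cobarD_eq, Polynomial.map_sub, map_C, eval₂_sub (R := Cbar) (S := Cbar[X][X]), eval₂_C,
    map_etaR_etaR]
  simp only [RingHom.coe_comp, RingHom.coe_coe, Function.comp_apply, map_sub]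
  abel

lemma cobarD_C_mul {p : Cbar} (hp : etaR p = C p) (f : Cbar[X]) :
    cobarD (C p * f) = C (C p) * cobarD f := by
  simp only [cobarD_eq, Polynomial.map_mul, map_C, eval₂_mul (R := Cbar) (S := Cbar[X][X]),
    eval₂_C, RingHom.coe_comp, RingHom.coe_coe, Function.comp_apply, hp, map_mul]
  ring

lemma cobarD_eq_zero_of_C_mul_eq_coboundary {p c : Cbar} (hp : etaR p = C p) (hp0 : p ≠ 0)
    {f : Cbar[X]} (h : C p * f = etaR c - C c) : cobarD f = 0 := by
  have : C (C p) * cobarD f = 0 := by rw [← cobarD_C_mul hp, h, cobarD_coboundary]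
  simpa [hp0] using this

lemma a3_ne_zero : a3 ≠ 0 := MvPolynomial.X_ne_zero 0

lemma five_eq_zero : (5 : Cbar[X]) = 0 := by
  exact_mod_cast CharP.cast_eq_zero Cbar[X] 5

lemma a3_mul_x1 : C a3 * (C a4 * X + C a3 * X ^ 2) = etaR (4 * a4 ^ 2) - C (4 * a4 ^ 2) := by
  simp only [map_mul, map_pow, map_ofNat, etaR_a4]
  linear_combination (-3 * (C a3 * C a4 * X + C a3 ^ 2 * X ^ 2)) * five_eq_zero

lemma a3_mul_x2 :
    C a3 * (C (a4 ^ 2) * X + 2 * C (a3 * a4) * X ^ 2 + 3 * C (a3 ^ 2) * X ^ 3) =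
      etaR (a4 ^ 3) - C (a4 ^ 3) := by
  simp only [map_mul, map_pow, etaR_a4]
  linear_combination
    (-(C a3 * C a4 ^ 2 * X + 2 * C a3 ^ 2 * C a4 * X ^ 2 + C a3 ^ 3 * X ^ 3)) * five_eq_zero

lemma a3_mul_x3 :
    C a3 * (C (a4 ^ 3) * X + 3 * C (a3 * a4 ^ 2) * X ^ 2 - C (a3 ^ 2 * a4) * X ^ 3 -
      3 * C (a3 ^ 3) * X ^ 4) = etaR (2 * a4 ^ 4) - C (2 * a4 ^ 4) := by
  simp only [map_mul, map_pow, map_ofNat, etaR_a4]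
  linear_combination (-(3 * C a3 * C a4 ^ 3 * X + 9 * C a3 ^ 2 * C a4 ^ 2 * X ^ 2 +
    13 * C a3 ^ 3 * C a4 * X ^ 3 + 7 * C a3 ^ 4 * X ^ 4)) * five_eq_zero

end

/-- The elements `x_1 = a_4r + a_3r²`, `x_2 = a_4²r + 2a_3a_4r² + 3a_3²r³`, and
`x_3 = a_4³r + 3a_3a_4²r² − a_3²a_4r³ − 3a_3³r⁴` of `C[r]` are cocycles. -/
theorem x1_x2_x3_cocycles :
    cobarD (Polynomial.C a4 * Polynomial.X + Polynomial.C a3 * Polynomial.X ^ 2) = 0 ∧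
    cobarD
        (Polynomial.C (a4 ^ 2) * Polynomial.X + 2 * Polynomial.C (a3 * a4) * Polynomial.X ^ 2 +
          3 * Polynomial.C (a3 ^ 2) * Polynomial.X ^ 3) = 0 ∧
    cobarD
        (Polynomial.C (a4 ^ 3) * Polynomial.X +
          3 * Polynomial.C (a3 * a4 ^ 2) * Polynomial.X ^ 2 -
          Polynomial.C (a3 ^ 2 * a4) * Polynomial.X ^ 3 -
          3 * Polynomial.C (a3 ^ 3) * Polynomial.X ^ 4) = 0 := by
  exact ⟨cobarD_eq_zero_of_C_mul_eq_coboundary etaR_a3 a3_ne_zero a3_mul_x1,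
    cobarD_eq_zero_of_C_mul_eq_coboundary etaR_a3 a3_ne_zero a3_mul_x2,
    cobarD_eq_zero_of_C_mul_eq_coboundary etaR_a3 a3_ne_zero a3_mul_x3⟩
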